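/- For integer D ≥ 2, the trinomial f(x) = x^D + x + 1 has the property that at most 2 of its complex roots share any given absolute value, its non-real roots come in conjugate pairs, and consequently the set of log-absolute values of roots of f, i.e. Re(Z(g)) for g(z) = e^{Dz} + e^z + 1, has cardinality exactly ⌈D/2⌉. -/

import Mathlib

noncomputable section

open Complex Polynomial

private theorem trin_conj (D : ℕ) (x : ℂ) (hx : x ^ D + x + 1 = 0) :
    (starRingEnd ℂ x) ^ D + starRingEnd ℂ x + 1 = 0 := by
  have := congrArg (starRingEnd ℂ) hx
  simpa [map_add, map_pow] using this

private theorem trin_abs_eq (D : ℕ) (x y : ℂ) (hx : x ^ D + x + 1 = 0)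
    (hy : y ^ D + y + 1 = 0) (h : ‖x‖ = ‖y‖) :
    y = x ∨ y = starRingEnd ℂ x := by
  have ex : x ^ D = -(x + 1) := by linear_combination hx
  have ey : y ^ D = -(y + 1) := by linear_combination hy
  have hx1 : ‖x‖ ^ D = ‖x + 1‖ := by
    rw [← norm_pow, ex, norm_neg]
  have hy1 : ‖y‖ ^ D = ‖y + 1‖ := by
    rw [← norm_pow, ey, norm_neg]
  have habs1 : ‖x + 1‖ = ‖y + 1‖ := by rw [← hx1, ← hy1, h]
  have h2 : ‖x‖ ^ 2 = ‖y‖ ^ 2 := by rw [h]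
  have h3 : ‖x+1‖ ^ 2 = ‖y+1‖ ^ 2 := by rw [habs1]
  rw [Complex.sq_norm, Complex.sq_norm, Complex.normSq_apply, Complex.normSq_apply] at h2 h3
  simp only [Complex.add_re, Complex.add_im, Complex.one_re, Complex.one_im] at h3
  have hre : x.re = y.re := by nlinarith
  rcases sq_eq_sq_iff_eq_or_eq_neg.mp (by nlinarith : y.im ^ 2 = x.im ^ 2) with h | h
  · left; exact Complex.ext hre.symm h
  · right; exact Complex.ext (by simp [hre]) (by simp [h])

private theorem trin_sep (D : ℕ) (hD : 2 ≤ D) : (((X:ℂ[X]) ^ D + X + 1)).Separable := by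
  rw [Polynomial.Separable]
  rw [Polynomial.isCoprime_iff_aeval_ne_zero_of_isAlgClosed (k := ℂ) ℂ]
  intro a
  by_contra hcon
  push_neg at hcon
  obtain ⟨h1, h2⟩ := hcon
  simp only [derivative_add, derivative_one, derivative_X, derivative_X_pow, map_add,
    aeval_X, map_pow, map_natCast, map_one, add_zero, aeval_X_pow, map_mul] at h1 h2
  have hDR : (2:ℝ) ≤ (D:ℝ) := by exact_mod_cast hD
  have hD0 : (D:ℂ) ≠ 0 := Nat.cast_ne_zero.mpr (by omega)
  have hpow : a ^ D = a * a ^ (D - 1) := by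
    rw [← pow_succ']
    congr 1
    omega
  have e2 : (D:ℂ) * a ^ D + a = 0 := by
    rw [hpow]; linear_combination a * h2
  have key : a * ((D:ℂ) - 1) = -(D:ℂ) := by linear_combination (D:ℂ) * h1 - e2
  have hD1 : (D:ℂ) - 1 ≠ 0 := by
    have : ((D-1:ℕ):ℂ) ≠ 0 := Nat.cast_ne_zero.mpr (by omega)
    rwa [Nat.cast_sub (by omega), Nat.cast_one] at this
  have ha : a = -(D:ℂ) / ((D:ℂ) - 1) := by
    field_simp
    linear_combination key
  have hpm : a ^ (D - 1) = -1 / (D:ℂ) := by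
    field_simp
    linear_combination h2
  have habsa : ‖a‖ = (D:ℝ) / ((D:ℝ) - 1) := by
    rw [ha, norm_div, norm_neg, Complex.norm_natCast]
    congr 1
    have h' : (D:ℂ) - 1 = (((D:ℝ) - 1 : ℝ) : ℂ) := by push_cast; ring
    rw [h', Complex.norm_real, Real.norm_eq_abs, _root_.abs_of_nonneg (by linarith)]
  have hgt : 1 < ‖a‖ := by
    rw [habsa, lt_div_iff₀ (by linarith)]
    linarith
  have hlt : ‖a‖ ^ (D - 1) = 1 / (D:ℝ) := by
    rw [← norm_pow, hpm]
    rw [norm_div, norm_neg, norm_one, Complex.norm_natCast]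
  have h1lt : 1 < ‖a‖ ^ (D - 1) := one_lt_pow₀ hgt (by omega)
  rw [hlt] at h1lt
  have : (1:ℝ)/(D:ℝ) < 1 := by
    rw [div_lt_one (by linarith)]
    linarith
  linarith

private theorem trin_even_pos (D : ℕ) (hD : 2 ≤ D) (hE : Even D) (t : ℝ) :
    0 < t ^ D + t + 1 := by
  rcases le_or_gt t (-1) with h | h
  · have h1 : 1 ≤ -t := by linarith
    have h2 : -t ≤ (-t) ^ D := le_self_pow₀ h1 (by omega)
    have heq : (-t) ^ D = t ^ D := hE.neg_pow t
    linarith [heq ▸ h2]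
  · have h0 : 0 ≤ t ^ D := hE.pow_nonneg t
    linarith

private theorem trin_odd_mono (D : ℕ) (hO : Odd D) :
    StrictMono (fun t : ℝ => t ^ D + t + 1) := by
  have h1 : StrictMono (fun t : ℝ => t ^ D) := Odd.strictMono_pow hO
  exact fun a b hab => by simpa using add_lt_add (h1 hab) hab

private theorem trin_odd_exists (D : ℕ) (hD : 2 ≤ D) (hO : Odd D) :
    ∃ t : ℝ, t ^ D + t + 1 = 0 := by
  have hc : ContinuousOn (fun t : ℝ => t ^ D + t + 1) (Set.Icc (-1) 0) := by
    fun_prop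
  have h0 : (0:ℝ) ∈ Set.Icc ((-1:ℝ) ^ D + (-1) + 1) ((0:ℝ) ^ D + 0 + 1) := by
    rw [hO.neg_one_pow, zero_pow (by omega)]
    norm_num
  obtain ⟨t, _, ht⟩ := intermediate_value_Icc (by norm_num : (-1:ℝ) ≤ 0) hc h0
  exact ⟨t, ht⟩

/-- for `D ≥ 2` and the trinomial `f(x) = x^D + x + 1`: roots come in
conjugate pairs, at most two roots share any given absolute value, and the set of
log-absolute values of the roots (i.e. `Re(Z(e^{Dz}+e^z+1))`) has cardinality
exactly `⌈D/2⌉ = (D+1)/2`. -/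
theorem trinomial_log_abs_card (D : ℕ) (hD : 2 ≤ D) :
    (∀ x : ℂ, x ^ D + x + 1 = 0 →
      (starRingEnd ℂ x) ^ D + starRingEnd ℂ x + 1 = 0) ∧
    (∀ x y z : ℂ, x ^ D + x + 1 = 0 → y ^ D + y + 1 = 0 → z ^ D + z + 1 = 0 →
      x ≠ y → x ≠ z → y ≠ z →
      ‖x‖ = ‖y‖ → ‖y‖ = ‖z‖ → False) ∧
    Set.ncard {r : ℝ | ∃ x : ℂ, x ^ D + x + 1 = 0 ∧ Real.log (‖x‖) = r}
      = (D + 1) / 2 := by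
  classical
  refine ⟨fun x hx => trin_conj D x hx, ?_, ?_⟩
  · intro x y z hx hy hz hxy hxz hyz haxy hayz
    rcases trin_abs_eq D x y hx hy haxy with h | h
    · exact hxy h.symm
    rcases trin_abs_eq D x z hx hz (haxy.trans hayz) with h' | h'
    · exact hxz h'.symm
    exact hyz (h.trans h'.symm)
  -- counting part
  set p : ℂ[X] := X ^ D + X + 1 with hp
  have hdeg : p.natDegree = D := by
    rw [hp]
    compute_degree!
    · have h1 : ¬ 1 = D := by omega
      have h2 : ¬ D = 0 := by omega
      simp [h1, h2]
    · omega
  have hp0 : p ≠ 0 := by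
    intro h
    rw [h, natDegree_zero] at hdeg
    omega
  have hnodup : p.roots.Nodup := Polynomial.nodup_roots (trin_sep D hD)
  have hcard : p.roots.card = D := by
    rw [← hdeg]
    exact (Polynomial.splits_iff_card_roots.mp (IsAlgClosed.splits p))
  set T : Finset ℂ := p.roots.toFinset with hT
  have hTcard : T.card = D := by
    rw [hT, Multiset.toFinset_card_of_nodup hnodup, hcard]
  have hmem : ∀ x : ℂ, x ∈ T ↔ x ^ D + x + 1 = 0 := by
    intro x
    rw [hT, Multiset.mem_toFinset, Polynomial.mem_roots hp0, Polynomial.IsRoot, hp]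
    simp
  set f : ℂ → ℝ := fun x => Real.log (‖x‖) with hf
  have hne : ∀ x : ℂ, x ^ D + x + 1 = 0 → x ≠ 0 := by
    intro x hx h0
    rw [h0, zero_pow (by omega)] at hx
    simp at hx
  have hfeq : ∀ x y : ℂ, x ^ D + x + 1 = 0 → y ^ D + y + 1 = 0 → f x = f y →
      y = x ∨ y = starRingEnd ℂ x := by
    intro x y hx hy hfxy
    refine trin_abs_eq D x y hx hy ?_
    have h1 : ‖x‖ ∈ Set.Ioi (0:ℝ) := by
      simp [Set.mem_Ioi, norm_pos_iff, hne x hx]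
    have h2 : ‖y‖ ∈ Set.Ioi (0:ℝ) := by
      simp [Set.mem_Ioi, norm_pos_iff, hne y hy]
    exact Real.log_injOn_pos h1 h2 hfxy
  have hfconj : ∀ x : ℂ, f (starRingEnd ℂ x) = f x := by
    intro x; simp [hf]
  -- the set equals the coe of the image finset
  have hSet : {r : ℝ | ∃ x : ℂ, x ^ D + x + 1 = 0 ∧ Real.log (‖x‖) = r}
      = ↑(T.image f) := by
    ext r
    simp only [Set.mem_setOf_eq, Finset.coe_image, Set.mem_image, Finset.mem_coe]
    constructor
    · rintro ⟨x, hx, hr⟩; exact ⟨x, (hmem x).mpr hx, hr⟩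
    · rintro ⟨x, hx, hr⟩; exact ⟨x, (hmem x).mp hx, hr⟩
  rw [hSet, Set.ncard_coe_finset]
  -- split into real and non-real roots
  set Tr : Finset ℂ := T.filter (fun x => x.im = 0) with hTr
  set Tn : Finset ℂ := T.filter (fun x => ¬ x.im = 0) with hTn
  have hsplitcard : Tr.card + Tn.card = T.card :=
    Finset.card_filter_add_card_filter_not _
  have himage : T.image f = Tr.image f ∪ Tn.image f := by
    rw [← Finset.image_union, Finset.filter_union_filter_not_eq]
  have hdisj : Disjoint (Tr.image f) (Tn.image f) := by
    rw [Finset.disjoint_left]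
    rintro b hb hb'
    obtain ⟨x, hx, hxb⟩ := Finset.mem_image.mp hb
    obtain ⟨y, hy, hyb⟩ := Finset.mem_image.mp hb'
    rw [hTr, Finset.mem_filter] at hx
    rw [hTn, Finset.mem_filter] at hy
    rcases hfeq x y ((hmem x).mp hx.1) ((hmem y).mp hy.1) (hxb.trans hyb.symm) with h | h
    · exact hy.2 (h ▸ hx.2)
    · apply hy.2
      rw [h]
      simp [hx.2]
  have hTrInj : (Tr.image f).card = Tr.card := by
    apply Finset.card_image_of_injOn
    intro x hx y hy hxy
    simp only [Finset.mem_coe, hTr, Finset.mem_filter] at hx hy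
    rcases hfeq x y ((hmem x).mp hx.1) ((hmem y).mp hy.1) hxy with h | h
    · exact h.symm
    · rw [h]
      exact (Complex.conj_eq_iff_im.mpr hx.2).symm ▸ rfl
  have hTnCard : Tn.card = 2 * (Tn.image f).card := by
    rw [Finset.card_eq_sum_card_image f Tn]
    rw [Finset.sum_congr rfl (fun b hb => ?_), Finset.sum_const, smul_eq_mul, mul_comm]
    obtain ⟨x, hx, hxb⟩ := Finset.mem_image.mp hb
    have hxT := hx
    rw [hTn, Finset.mem_filter] at hxT
    have hxroot := (hmem x).mp hxT.1
    have hfilter : Tn.filter (fun y => f y = b) = {x, starRingEnd ℂ x} := by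
      ext y
      rw [Finset.mem_filter, Finset.mem_insert, Finset.mem_singleton]
      constructor
      · rintro ⟨hy, hyb⟩
        rw [hTn, Finset.mem_filter] at hy
        exact hfeq x y hxroot ((hmem y).mp hy.1) (hxb.trans hyb.symm)
      · rintro (rfl | rfl)
        · exact ⟨hx, hxb⟩
        · refine ⟨?_, (hfconj x).trans hxb⟩
          rw [hTn, Finset.mem_filter]
          refine ⟨(hmem _).mpr (trin_conj D x hxroot), ?_⟩
          simpa using hxT.2
    rw [hfilter]
    rw [Finset.card_insert_of_notMem, Finset.card_singleton]
    rw [Finset.mem_singleton]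
    intro h
    exact hxT.2 (Complex.conj_eq_iff_im.mp h.symm)
  -- count real roots
  have hTrCard : Tr.card = D % 2 := by
    rcases Nat.even_or_odd D with hE | hO
    · rw [Nat.even_iff.mp hE]
      rw [Finset.card_eq_zero]
      rw [Finset.eq_empty_iff_forall_notMem]
      intro x hx
      rw [hTr, Finset.mem_filter] at hx
      have hxroot := (hmem x).mp hx.1
      have hxr : x = (x.re : ℂ) := Complex.ext rfl (by simp [hx.2])
      rw [hxr] at hxroot
      have : ((x.re ^ D + x.re + 1 : ℝ) : ℂ) = 0 := by push_cast; exact hxroot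
      have h0 : x.re ^ D + x.re + 1 = 0 := by exact_mod_cast this
      exact absurd h0 (ne_of_gt (trin_even_pos D hD hE x.re))
    · rw [Nat.odd_iff.mp hO]
      obtain ⟨t, ht⟩ := trin_odd_exists D hD hO
      rw [Finset.card_eq_one]
      refine ⟨(t : ℂ), ?_⟩
      ext y
      rw [hTr, Finset.mem_filter, Finset.mem_singleton]
      constructor
      · rintro ⟨hy, hyim⟩
        have hyroot := (hmem y).mp hy
        have hyr : y = (y.re : ℂ) := Complex.ext rfl (by simp [hyim])
        rw [hyr] at hyroot
        have : ((y.re ^ D + y.re + 1 : ℝ) : ℂ) = 0 := by push_cast; exact hyroot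
        have h0 : y.re ^ D + y.re + 1 = 0 := by exact_mod_cast this
        have := (trin_odd_mono D hO).injective (h0.trans ht.symm)
        rw [hyr, this]
      · rintro rfl
        constructor
        · refine (hmem _).mpr ?_
          have : ((t ^ D + t + 1 : ℝ) : ℂ) = 0 := by rw [ht]; norm_num
          push_cast at this
          exact this
        · simp
  rw [himage, Finset.card_union_of_disjoint hdisj, hTrInj]
  rw [hTcard] at hsplitcard
  have hmod : D % 2 = 0 ∨ D % 2 = 1 := by omega
  omega
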